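/- Let π_X be a probability measure on ℝ^{d_x}, let A ∈ ℝ^{d_y×d_x} be a matrix, fix y ∈ ℝ^{d_y}, m ∈ ℝ^{d_x}, and σ_e, σ₁ > 0. Define the Gaussian likelihood p(x) = (2π σ_e²)^{−d_y/2} exp(−‖y − A x‖²/(2 σ_e²)) and the marginal π_Y(y) = ∫ p(x) dπ_X(x), and assume 0 < π_Y(y) < ∞. Let q be a probability measure on ℝ^{d_x} with mean m and covariance σ₁² I, absolutely continuous with respect to π_X and with KL(q, π_X) < ∞. Then −log π_Y(y) ≤ KL(q, π_X) + (1/(2 σ_e²)) ‖y − A m‖² + c₁, where c₁ = (d_y/2) log(2π σ_e²) + σ₁² trace(AᵀA)/(2 σ_e²). -/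

import Mathlib

open MeasureTheory Matrix

/-!
For any `q ≪ π` and any `f` with `∫ exp f dπ < ∞`, Gibbs' inequality `KL(q, π_f) ≥ 0` for the
tilted measure `π_f ∝ exp f • π` gives the evidence lower bound
`∫ f dq - KL(q, π) ≤ log ∫ exp f dπ`. Take `f = log p`. Then
`∫ log p dq = -(d_y/2) log(2πσₑ²) - ∫ ‖y - A x‖² dq / (2σₑ²)`, and the bias–variance
decomposition `∫ ‖y - A x‖² dq = ‖y - A m‖² + trace (A Σ Aᵀ)` for `q` with mean `m` and
covariance `Σ = σ₁² I` turns the lower bound into the claimed upper bound on `-log π_Y(y)`.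
-/

lemma integral_sub_integral_llr_le_log_integral_exp {α : Type*} [MeasurableSpace α]
    {μ ν : Measure α} [IsProbabilityMeasure μ] [IsProbabilityMeasure ν] {f : α → ℝ}
    (hμν : μ ≪ ν) (h_int : Integrable (llr μ ν) μ) (hfμ : Integrable f μ)
    (hfν : Integrable (fun x ↦ Real.exp (f x)) ν) :
    ∫ x, f x ∂μ - ∫ x, llr μ ν x ∂μ ≤ Real.log (∫ x, Real.exp (f x) ∂ν) := by
  have := isProbabilityMeasure_tilted hfν
  have hμν' : μ ≪ ν.tilted f := hμν.trans (absolutelyContinuous_tilted hfν)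
  have gibbs := InformationTheory.integral_llr_add_sub_measure_univ_nonneg hμν'
    (integrable_llr_tilted_right hμν hfμ h_int hfν)
  rw [integral_llr_tilted_right hμν hfμ hfν h_int] at gibbs
  simp only [probReal_univ] at gibbs
  linarith

section

variable {ι κ : Type*} [Fintype ι] [Fintype κ]

lemma sq_dotProduct (a v : ι → ℝ) :
    (a ⬝ᵥ v) ^ 2 = ∑ j, ∑ k, a j * a k * (v j * v k) := by
  rw [sq, dotProduct, Finset.sum_mul_sum]
  exact Finset.sum_congr rfl fun j _ ↦ Finset.sum_congr rfl fun k _ ↦ by ring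

lemma sum_dotProduct_mulVec_rows_eq_trace (A : Matrix κ ι ℝ) (C : Matrix ι ι ℝ) :
    ∑ i, A i ⬝ᵥ C *ᵥ A i = (A * C * Aᵀ).trace := by
  simp only [trace, diag_apply, mul_apply, transpose_apply, dotProduct, mulVec, Finset.mul_sum,
    Finset.sum_mul]
  refine Finset.sum_congr rfl fun i _ ↦ ?_
  rw [Finset.sum_comm]
  exact Finset.sum_congr rfl fun j _ ↦ Finset.sum_congr rfl fun k _ ↦ by ring

lemma trace_mul_smul_one_mul_transpose [DecidableEq ι] (A : Matrix κ ι ℝ) (s : ℝ) :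
    (A * (s • (1 : Matrix ι ι ℝ)) * Aᵀ).trace = s * (Aᵀ * A).trace := by
  rw [Matrix.mul_smul, Matrix.mul_one, Matrix.smul_mul, trace_smul, trace_mul_comm, smul_eq_mul]

lemma sq_sub_dotProduct_eq (a x m : ι → ℝ) (b : ℝ) :
    (b - a ⬝ᵥ x) ^ 2
      = (b - a ⬝ᵥ m) ^ 2 - 2 * (b - a ⬝ᵥ m) * a ⬝ᵥ (x - m) + (a ⬝ᵥ (x - m)) ^ 2 := by
  rw [dotProduct_sub]; ring

end

structure HasMeanCov {ι : Type*} [Fintype ι] (q : Measure (ι → ℝ)) (m : ι → ℝ)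
    (C : Matrix ι ι ℝ) : Prop where
  integrable_coord : ∀ i, Integrable (fun x ↦ x i) q
  integral_coord : ∀ i, ∫ x, x i ∂q = m i
  integrable_cov : ∀ i j, Integrable (fun x ↦ (x i - m i) * (x j - m j)) q
  integral_cov : ∀ i j, ∫ x, (x i - m i) * (x j - m j) ∂q = C i j

namespace HasMeanCov

variable {ι κ : Type*} [Fintype ι] [Fintype κ] {q : Measure (ι → ℝ)} {m : ι → ℝ}
  {C : Matrix ι ι ℝ}

lemma integrable_coord_sub [IsFiniteMeasure q] (h : HasMeanCov q m C) (i : ι) :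
    Integrable (fun x ↦ x i - m i) q :=
  (h.integrable_coord i).sub (integrable_const _)

lemma integrable_dotProduct_sub [IsFiniteMeasure q] (h : HasMeanCov q m C) (a : ι → ℝ) :
    Integrable (fun x ↦ a ⬝ᵥ (x - m)) q :=
  integrable_finsetSum _ fun i _ ↦ (h.integrable_coord_sub i).const_mul (a i)

lemma integral_dotProduct_sub [IsProbabilityMeasure q] (h : HasMeanCov q m C) (a : ι → ℝ) :
    ∫ x, a ⬝ᵥ (x - m) ∂q = 0 := by
  simp only [dotProduct, Pi.sub_apply]
  rw [integral_finsetSum _ fun i _ ↦ (h.integrable_coord_sub i).const_mul (a i)]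
  refine Finset.sum_eq_zero fun i _ ↦ ?_
  rw [integral_const_mul, integral_sub (h.integrable_coord i) (integrable_const _),
    h.integral_coord, integral_const, probReal_univ, one_smul, sub_self, mul_zero]

lemma integrable_sq_dotProduct_sub (h : HasMeanCov q m C) (a : ι → ℝ) :
    Integrable (fun x ↦ (a ⬝ᵥ (x - m)) ^ 2) q := by
  simp only [sq_dotProduct, Pi.sub_apply]
  exact integrable_finsetSum _ fun j _ ↦ integrable_finsetSum _ fun k _ ↦
    (h.integrable_cov j k).const_mul _

lemma integral_sq_dotProduct_sub (h : HasMeanCov q m C) (a : ι → ℝ) :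
    ∫ x, (a ⬝ᵥ (x - m)) ^ 2 ∂q = a ⬝ᵥ C *ᵥ a := by
  simp only [sq_dotProduct, Pi.sub_apply]
  rw [integral_finsetSum _ fun j _ ↦ integrable_finsetSum _ fun k _ ↦
    (h.integrable_cov j k).const_mul _]
  simp only [integral_finsetSum _ fun j _ ↦ (h.integrable_cov _ j).const_mul _,
    integral_const_mul, h.integral_cov, dotProduct, mulVec, Finset.mul_sum]
  exact Finset.sum_congr rfl fun j _ ↦ Finset.sum_congr rfl fun k _ ↦ by ring

lemma integrable_sq_sub_dotProduct [IsFiniteMeasure q] (h : HasMeanCov q m C) (a : ι → ℝ)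
    (b : ℝ) : Integrable (fun x ↦ (b - a ⬝ᵥ x) ^ 2) q := by
  rw [funext fun x ↦ sq_sub_dotProduct_eq a x m b]
  exact ((integrable_const _).sub ((h.integrable_dotProduct_sub a).const_mul _)).add
    (h.integrable_sq_dotProduct_sub a)

lemma integral_sq_sub_dotProduct [IsProbabilityMeasure q] (h : HasMeanCov q m C) (a : ι → ℝ)
    (b : ℝ) : ∫ x, (b - a ⬝ᵥ x) ^ 2 ∂q = (b - a ⬝ᵥ m) ^ 2 + a ⬝ᵥ C *ᵥ a := by
  have hlin : Integrable (fun x ↦ 2 * (b - a ⬝ᵥ m) * a ⬝ᵥ (x - m)) q :=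
    (h.integrable_dotProduct_sub a).const_mul _
  have hconst_sub : Integrable (fun x ↦ (b - a ⬝ᵥ m) ^ 2 - 2 * (b - a ⬝ᵥ m) * a ⬝ᵥ (x - m)) q :=
    (integrable_const _).sub hlin
  rw [funext fun x ↦ sq_sub_dotProduct_eq a x m b,
    integral_add hconst_sub (h.integrable_sq_dotProduct_sub a),
    integral_sub (integrable_const _) hlin, integral_const_mul, h.integral_dotProduct_sub,
    h.integral_sq_dotProduct_sub, integral_const, probReal_univ, one_smul, mul_zero, sub_zero]

lemma integrable_sum_sq_sub_mulVec [IsFiniteMeasure q] (h : HasMeanCov q m C)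
    (A : Matrix κ ι ℝ) (y : κ → ℝ) : Integrable (fun x ↦ ∑ i, (y i - (A *ᵥ x) i) ^ 2) q :=
  integrable_finsetSum _ fun i _ ↦ h.integrable_sq_sub_dotProduct (A i) (y i)

lemma integral_sum_sq_sub_mulVec [IsProbabilityMeasure q] (h : HasMeanCov q m C)
    (A : Matrix κ ι ℝ) (y : κ → ℝ) :
    ∫ x, ∑ i, (y i - (A *ᵥ x) i) ^ 2 ∂q
      = ∑ i, (y i - (A *ᵥ m) i) ^ 2 + (A * C * Aᵀ).trace := by
  have hint (i : κ) : Integrable (fun x ↦ (y i - (A *ᵥ x) i) ^ 2) q :=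
    h.integrable_sq_sub_dotProduct (A i) (y i)
  rw [integral_finsetSum _ fun i _ ↦ hint i, ← sum_dotProduct_mulVec_rows_eq_trace,
    ← Finset.sum_add_distrib]
  exact Finset.sum_congr rfl fun i _ ↦ h.integral_sq_sub_dotProduct (A i) (y i)

end HasMeanCov

theorem neg_log_data_likelihood_bound_general
    {dx dy : ℕ} (πX q : Measure (Fin dx → ℝ))
    [IsProbabilityMeasure πX] [IsProbabilityMeasure q]
    (A : Matrix (Fin dy) (Fin dx) ℝ) (y : Fin dy → ℝ) (m : Fin dx → ℝ)
    (σe σ₁ : ℝ) (hσe : 0 < σe)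
    (p : (Fin dx → ℝ) → ℝ)
    (hp : p = fun x => (2 * Real.pi * σe ^ 2) ^ (-(dy : ℝ) / 2)
        * Real.exp (-(∑ i, (y i - A.mulVec x i) ^ 2) / (2 * σe ^ 2)))
    (hp_int : Integrable p πX)
    (hq_mean_int : ∀ i, Integrable (fun x => x i) q)
    (hq_mean : ∀ i, ∫ x, x i ∂q = m i)
    (hq_cov_int : ∀ i j, Integrable (fun x => (x i - m i) * (x j - m j)) q)
    (hq_cov : ∀ i j, ∫ x, (x i - m i) * (x j - m j) ∂q
      = (σ₁ ^ 2 • (1 : Matrix (Fin dx) (Fin dx) ℝ)) i j)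
    (hac : q ≪ πX)
    (hKL_int : Integrable (fun x => Real.log ((q.rnDeriv πX x).toReal)) q) :
    -Real.log (∫ x, p x ∂πX)
      ≤ (∫ x, Real.log ((q.rnDeriv πX x).toReal) ∂q)
        + (1 / (2 * σe ^ 2)) * ∑ i, (y i - A.mulVec m i) ^ 2
        + ((dy : ℝ) / 2 * Real.log (2 * Real.pi * σe ^ 2)
            + σ₁ ^ 2 * (Aᵀ * A).trace / (2 * σe ^ 2)) := by
  have hq : HasMeanCov q m (σ₁ ^ 2 • (1 : Matrix (Fin dx) (Fin dx) ℝ)) :=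
    ⟨hq_mean_int, hq_mean, hq_cov_int, hq_cov⟩
  have hbase : 0 < 2 * Real.pi * σe ^ 2 := by positivity
  set c := (2 * Real.pi * σe ^ 2) ^ (-(dy : ℝ) / 2)
  set f : (Fin dx → ℝ) → ℝ :=
    fun x ↦ Real.log c + -(∑ i, (y i - A.mulVec x i) ^ 2) / (2 * σe ^ 2)
  have hexp_f : (fun x ↦ Real.exp (f x)) = p := by
    rw [hp]
    funext x
    rw [Real.exp_add, Real.exp_log (Real.rpow_pos_of_pos hbase _)]
  have hquad_int : Integrable (fun x ↦ -(∑ i, (y i - A.mulVec x i) ^ 2) / (2 * σe ^ 2)) q :=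
    (hq.integrable_sum_sq_sub_mulVec A y).neg.div_const _
  have hf_int : Integrable f q := (integrable_const _).add hquad_int
  have hf_mean : ∫ x, f x ∂q = -(dy : ℝ) / 2 * Real.log (2 * Real.pi * σe ^ 2)
      - (1 / (2 * σe ^ 2)) * ∑ i, (y i - A.mulVec m i) ^ 2
      - σ₁ ^ 2 * (Aᵀ * A).trace / (2 * σe ^ 2) := by
    rw [integral_add (integrable_const _) hquad_int, integral_const, integral_div, integral_neg,
      hq.integral_sum_sq_sub_mulVec, trace_mul_smul_one_mul_transpose, Real.log_rpow hbase,
      probReal_univ, one_smul]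
    ring
  have elbo := integral_sub_integral_llr_le_log_integral_exp hac hKL_int hf_int
    (hexp_f ▸ hp_int)
  rw [hexp_f, hf_mean] at elbo
  change _ - ∫ x, Real.log ((q.rnDeriv πX x).toReal) ∂q ≤ _ at elbo
  linarith

/-- **Bound on the negative data log-likelihood.** With Gaussian likelihood
`p(x) = (2πσₑ²)^{-d_y/2} exp(-‖y - A x‖²/(2σₑ²))` and marginal `π_Y(y) = ∫ p dπ_X`,
for any probability measure `q ≪ π_X` with mean `m`, covariance `σ₁² I` and finite KL
divergence, `-log π_Y(y) ≤ KL(q, π_X) + ‖y - A m‖²/(2σₑ²) + c₁`, where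
`c₁ = (d_y/2) log(2πσₑ²) + σ₁² trace(AᵀA)/(2σₑ²)`. -/
theorem neg_log_data_likelihood_bound
    {dx dy : ℕ} (πX q : Measure (Fin dx → ℝ))
    [IsProbabilityMeasure πX] [IsProbabilityMeasure q]
    (A : Matrix (Fin dy) (Fin dx) ℝ) (y : Fin dy → ℝ) (m : Fin dx → ℝ)
    (σe σ₁ : ℝ) (hσe : 0 < σe) (hσ₁ : 0 < σ₁)
    (p : (Fin dx → ℝ) → ℝ)
    (hp : p = fun x => (2 * Real.pi * σe ^ 2) ^ (-(dy : ℝ) / 2)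
        * Real.exp (-(∑ i, (y i - A.mulVec x i) ^ 2) / (2 * σe ^ 2)))
    (hp_int : Integrable p πX) (hπY_pos : 0 < ∫ x, p x ∂πX)
    (hq_mean_int : ∀ i, Integrable (fun x => x i) q)
    (hq_mean : ∀ i, ∫ x, x i ∂q = m i)
    (hq_cov_int : ∀ i j, Integrable (fun x => (x i - m i) * (x j - m j)) q)
    (hq_cov : ∀ i j, ∫ x, (x i - m i) * (x j - m j) ∂q
      = (σ₁ ^ 2 • (1 : Matrix (Fin dx) (Fin dx) ℝ)) i j)
    (hac : q ≪ πX)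
    (hKL_int : Integrable (fun x => Real.log ((q.rnDeriv πX x).toReal)) q) :
    -Real.log (∫ x, p x ∂πX)
      ≤ (∫ x, Real.log ((q.rnDeriv πX x).toReal) ∂q)
        + (1 / (2 * σe ^ 2)) * ∑ i, (y i - A.mulVec m i) ^ 2
        + ((dy : ℝ) / 2 * Real.log (2 * Real.pi * σe ^ 2)
            + σ₁ ^ 2 * (Aᵀ * A).trace / (2 * σe ^ 2)) :=
  neg_log_data_likelihood_bound_general πX q A y m σe σ₁ hσe p hp hp_int hq_mean_int hq_mean
    hq_cov_int hq_cov hac hKL_int
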